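/- arXiv:1606.05889 — 3 statements merged into one kernel-verified Lean document; each statement's English description precedes it below -/
import Mathlib

section
/- Suppose the matrix A ∈ ℝ^{m×n} satisfies the ℓ2 group robust null space property of order k with constants ρ ∈ (0,1) and τ ≥ 0. Let x ∈ ℝⁿ, let y = Ax + η with ‖η‖₂ ≤ ε, and let x̂ be any minimizer of ‖z‖₁ over z ∈ ℝⁿ subject to ‖Az − y‖₂ ≤ ε. Then the residual h = x̂ − x satisfies ‖h‖₁ ≤ (2/(1−ρ))·[(1+ρ)·σ_{k,𝒢}(x,‖·‖₁) + 2τε]. -/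
open Finset

noncomputable section

namespace CS

/-- The ℓ1 norm of a vector. -/
def l1 {d : ℕ} (x : Fin d → ℝ) : ℝ := ∑ i, |x i|

/-- The ℓ2 (Euclidean) norm of a vector. -/
def l2 {d : ℕ} (x : Fin d → ℝ) : ℝ := Real.sqrt (∑ i, (x i) ^ 2)

/-- The ℓp norm of a vector (for real p ≥ 1). -/
def lpnorm {d : ℕ} (p : ℝ) (x : Fin d → ℝ) : ℝ := (∑ i, |x i| ^ p) ^ (1 / p)

/-- `restrict Λ x` agrees with `x` on `Λ` and is zero elsewhere. -/
def restrict {d : ℕ} (Λ : Finset (Fin d)) (x : Fin d → ℝ) : Fin d → ℝ :=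
  fun i => if i ∈ Λ then x i else 0

/-- The support of a vector. -/
def supp {d : ℕ} (x : Fin d → ℝ) : Finset (Fin d) :=
  Finset.univ.filter fun i => x i ≠ 0

/-- `G : Fin g → Finset (Fin n)` is a partition of `{1,…,n}` into `g` (nonempty,
pairwise disjoint) groups covering everything. -/
def IsPartition {n g : ℕ} (G : Fin g → Finset (Fin n)) : Prop :=
  (∀ j, (G j).Nonempty) ∧
  (∀ j j', j ≠ j' → Disjoint (G j) (G j')) ∧
  Finset.univ.biUnion G = Finset.univ

/-- A subset `Λ ⊆ {1,…,n}` is group `k`-sparse: it is a union of groups and has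
cardinality at most `k`. -/
def GroupSparseSet {n g : ℕ} (G : Fin g → Finset (Fin n)) (k : ℕ)
    (Λ : Finset (Fin n)) : Prop :=
  (∃ S : Finset (Fin g), Λ = S.biUnion G) ∧ Λ.card ≤ k

/-- A vector is group `l`-sparse: its support is contained in a union of groups
of total cardinality at most `l`. -/
def GroupSparseVec {n g : ℕ} (G : Fin g → Finset (Fin n)) (l : ℕ)
    (z : Fin n → ℝ) : Prop :=
  ∃ S : Finset (Fin g), supp z ⊆ S.biUnion G ∧ (S.biUnion G).card ≤ l

/-- The group restricted isometry property of order `l` with constant `δ`. -/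
def GRIP {m n g : ℕ} (A : Matrix (Fin m) (Fin n) ℝ) (G : Fin g → Finset (Fin n))
    (l : ℕ) (δ : ℝ) : Prop :=
  ∀ z : Fin n → ℝ, GroupSparseVec G l z →
    (1 - δ) * (l2 z) ^ 2 ≤ (l2 (A.mulVec z)) ^ 2 ∧
    (l2 (A.mulVec z)) ^ 2 ≤ (1 + δ) * (l2 z) ^ 2

/-- The ℓ2 group robust null space property of order `k`
with constants `ρ`, `τ`. -/
def GRNSP {m n g : ℕ} (A : Matrix (Fin m) (Fin n) ℝ) (G : Fin g → Finset (Fin n))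
    (k : ℕ) (ρ τ : ℝ) : Prop :=
  ∀ (h : Fin n → ℝ) (Λ : Finset (Fin n)), GroupSparseSet G k Λ →
    l2 (restrict Λ h) ≤
      ρ / Real.sqrt k * l1 (restrict Λᶜ h) + τ / Real.sqrt k * l2 (A.mulVec h)

/-- The group `k`-sparsity index of `x` with respect to the ℓ1 norm:
`σ_{k,𝒢}(x, ‖·‖₁) = min_{Λ ∈ GkS} ‖x − x_Λ‖₁ = min_{Λ ∈ GkS} ‖x_{Λᶜ}‖₁`. -/
def gIndex {n g : ℕ} (G : Fin g → Finset (Fin n)) (k : ℕ) (x : Fin n → ℝ) : ℝ :=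
  sInf {r | ∃ Λ : Finset (Fin n), GroupSparseSet G k Λ ∧ r = l1 (restrict Λᶜ x)}

/-- The (conventional) restricted isometry property of order `l`
with constant `δ`. -/
def RIP {m n : ℕ} (A : Matrix (Fin m) (Fin n) ℝ) (l : ℕ) (δ : ℝ) : Prop :=
  ∀ u : Fin n → ℝ, (supp u).card ≤ l →
    (1 - δ) * (l2 u) ^ 2 ≤ (l2 (A.mulVec u)) ^ 2 ∧
    (l2 (A.mulVec u)) ^ 2 ≤ (1 + δ) * (l2 u) ^ 2

/-- The (conventional) `k`-sparsity index
`σ_k(x, ‖·‖₁) = min_{z k-sparse} ‖x − z‖₁`. -/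
def sIndex {n : ℕ} (k : ℕ) (x : Fin n → ℝ) : ℝ :=
  sInf {r | ∃ z : Fin n → ℝ, (supp z).card ≤ k ∧ r = l1 (x - z)}

/-- The group support of `v`: the set of groups on which `v` is nonzero. -/
def Gsupp {n g : ℕ} (G : Fin g → Finset (Fin n)) (v : Fin n → ℝ) :
    Finset (Fin g) :=
  Finset.univ.filter fun j => restrict (G j) v ≠ 0

lemma l1_nonneg {d : ℕ} (x : Fin d → ℝ) : 0 ≤ l1 x :=
  Finset.sum_nonneg fun _ _ => abs_nonneg _

lemma l2_nonneg {d : ℕ} (x : Fin d → ℝ) : 0 ≤ l2 x := Real.sqrt_nonneg _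

lemma l2_eq_norm {d : ℕ} (x : Fin d → ℝ) :
    l2 x = ‖(WithLp.equiv 2 (Fin d → ℝ)).symm x‖ := by
  rw [EuclideanSpace.norm_eq]
  simp [l2, sq_abs]

lemma l2_add_le {d : ℕ} (u v : Fin d → ℝ) : l2 (u + v) ≤ l2 u + l2 v := by
  rw [l2_eq_norm, l2_eq_norm, l2_eq_norm]
  exact norm_add_le ((WithLp.equiv 2 (Fin d → ℝ)).symm u)
    ((WithLp.equiv 2 (Fin d → ℝ)).symm v)

lemma l2_neg {d : ℕ} (u : Fin d → ℝ) : l2 (-u) = l2 u := by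
  simp [l2]

lemma l1_split {d : ℕ} (Λ : Finset (Fin d)) (z : Fin d → ℝ) :
    l1 (restrict Λ z) + l1 (restrict Λᶜ z) = l1 z := by
  unfold l1 restrict
  rw [← Finset.sum_add_distrib]
  refine Finset.sum_congr rfl fun i _ => ?_
  by_cases hi : i ∈ Λ <;> simp [hi]

lemma l1_restrict_le_sqrt {d : ℕ} (Λ : Finset (Fin d)) (z : Fin d → ℝ) :
    l1 (restrict Λ z) ≤ Real.sqrt Λ.card * l2 (restrict Λ z) := by
  have h1 : l1 (restrict Λ z) = ∑ i ∈ Λ, |z i| := by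
    simp [l1, restrict, apply_ite abs, Finset.sum_ite_mem]
  have h2 : ∑ i, (restrict Λ z i) ^ 2 = ∑ i ∈ Λ, (z i) ^ 2 := by
    simp [restrict, apply_ite (· ^ 2), Finset.sum_ite_mem]
  have key : (∑ i ∈ Λ, |z i|) ^ 2 ≤ Λ.card * ∑ i ∈ Λ, (z i) ^ 2 := by
    have := sq_sum_le_card_mul_sum_sq (s := Λ) (f := fun i => |z i|)
    simpa [sq_abs] using this
  have hnn : (0:ℝ) ≤ ∑ i ∈ Λ, |z i| := Finset.sum_nonneg fun _ _ => abs_nonneg _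
  rw [h1]
  unfold l2
  rw [h2, ← Real.sqrt_mul (by positivity)]
  calc ∑ i ∈ Λ, |z i| = Real.sqrt ((∑ i ∈ Λ, |z i|) ^ 2) := by
        rw [Real.sqrt_sq hnn]
    _ ≤ Real.sqrt (Λ.card * ∑ i ∈ Λ, (z i) ^ 2) := Real.sqrt_le_sqrt key
/-- **ℓ1 error bound under the group robust null space property.**
If `A` satisfies the ℓ2 GRNSP of order `k` with constants `ρ ∈ (0,1)`, `τ ≥ 0`,
`y = Ax + η` with `‖η‖₂ ≤ ε`, and `x̂` minimizes `‖z‖₁` subject to `‖Az − y‖₂ ≤ ε`,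
then `‖x̂ − x‖₁ ≤ (2/(1−ρ))·[(1+ρ)σ_{k,𝒢}(x) + 2τε]`. -/
theorem l1_error_bound {n m g k : ℕ}
    (G : Fin g → Finset (Fin n)) (hG : IsPartition G)
    (hGk : ∀ j, (G j).card ≤ k)
    (A : Matrix (Fin m) (Fin n) ℝ)
    (ρ τ : ℝ) (hρ0 : 0 < ρ) (hρ1 : ρ < 1) (hτ : 0 ≤ τ)
    (hA : GRNSP A G k ρ τ)
    (x : Fin n → ℝ) (η : Fin m → ℝ) (ε : ℝ) (hη : l2 η ≤ ε)
    (y : Fin m → ℝ) (hy : y = A.mulVec x + η)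
    (xhat : Fin n → ℝ)
    (hfeas : l2 (A.mulVec xhat - y) ≤ ε)
    (hopt : ∀ z : Fin n → ℝ, l2 (A.mulVec z - y) ≤ ε → l1 xhat ≤ l1 z) :
    l1 (xhat - x) ≤ 2 / (1 - ρ) * ((1 + ρ) * gIndex G k x + 2 * τ * ε) := by
  set h : Fin n → ℝ := xhat - x with hh
  have hε0 : 0 ≤ ε := le_trans (l2_nonneg η) hη
  -- ‖Ah‖₂ ≤ 2ε
  have hAh : l2 (A.mulVec h) ≤ 2 * ε := by
    have heq : A.mulVec h = (A.mulVec xhat - y) + η := by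
      rw [hy, hh, Matrix.mulVec_sub]
      funext i; simp [Pi.add_apply, Pi.sub_apply]; ring
    rw [heq]
    calc l2 ((A.mulVec xhat - y) + η) ≤ l2 (A.mulVec xhat - y) + l2 η :=
          l2_add_le _ _
      _ ≤ ε + ε := add_le_add hfeas hη
      _ = 2 * ε := by ring
  -- x is feasible, hence l1 xhat ≤ l1 x
  have hxf : l2 (A.mulVec x - y) ≤ ε := by
    have : A.mulVec x - y = -η := by rw [hy]; abel
    rw [this, l2_neg]; exact hη
  have hopt' : l1 xhat ≤ l1 x := hopt x hxf
  have hAh0 : 0 ≤ l2 (A.mulVec h) := l2_nonneg _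
  -- per-Λ bound
  have perΛ : ∀ Λ : Finset (Fin n), GroupSparseSet G k Λ →
      (1 - ρ) * l1 h ≤ 2 * ((1 + ρ) * l1 (restrict Λᶜ x) + 2 * τ * ε) := by
    intro Λ hΛ
    -- key: l1 (restrict Λ h) ≤ ρ * l1 (restrict Λᶜ h) + τ * l2 (A h)
    have key : l1 (restrict Λ h) ≤ ρ * l1 (restrict Λᶜ h) + τ * l2 (A.mulVec h) := by
      rcases Nat.eq_zero_or_pos k with hk | hk
      · have hΛe : Λ = ∅ := Finset.card_eq_zero.mp
          (Nat.le_zero.mp (hk ▸ hΛ.2))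
        have : restrict Λ h = 0 := by
          funext i; simp [restrict, hΛe]
        rw [this]
        have : l1 (0 : Fin n → ℝ) = 0 := by simp [l1]
        rw [this]
        have := l1_nonneg (restrict Λᶜ h)
        positivity
      · have hks : (0:ℝ) < Real.sqrt k := Real.sqrt_pos.mpr (by exact_mod_cast hk)
        have h2 := hA h Λ hΛ
        calc l1 (restrict Λ h) ≤ Real.sqrt Λ.card * l2 (restrict Λ h) :=
              l1_restrict_le_sqrt Λ h
          _ ≤ Real.sqrt k * l2 (restrict Λ h) := by
              apply mul_le_mul_of_nonneg_right _ (l2_nonneg _)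
              exact Real.sqrt_le_sqrt (by exact_mod_cast hΛ.2)
          _ ≤ Real.sqrt k * (ρ / Real.sqrt k * l1 (restrict Λᶜ h)
                + τ / Real.sqrt k * l2 (A.mulVec h)) := by
              apply mul_le_mul_of_nonneg_left h2 (le_of_lt hks)
          _ = ρ * l1 (restrict Λᶜ h) + τ * l2 (A.mulVec h) := by
              field_simp
    -- optimality inequality
    have hlow : l1 (restrict Λ x) - l1 (restrict Λ h) + l1 (restrict Λᶜ h)
        - l1 (restrict Λᶜ x) ≤ l1 xhat := by
      have pt : ∀ i : Fin n,
          |restrict Λ x i| - |restrict Λ h i| + |restrict Λᶜ h i|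
            - |restrict Λᶜ x i| ≤ |xhat i| := by
        intro i
        have hxi : xhat i = x i + h i := by simp [hh]
        by_cases hi : i ∈ Λ
        · have hic : i ∉ Λᶜ := by simp [hi]
          simp only [restrict, if_pos hi, if_neg hic, abs_zero]
          rw [hxi]
          have key2 : |x i| - |h i| ≤ |x i + h i| := by
            have := abs_sub_abs_le_abs_sub (x i) (-(h i))
            rwa [abs_neg, sub_neg_eq_add] at this
          linarith
        · have hic : i ∈ Λᶜ := Finset.mem_compl.mpr hi
          simp only [restrict, if_neg hi, if_pos hic, abs_zero]
          rw [hxi]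
          have key2 : |h i| - |x i| ≤ |x i + h i| := by
            have := abs_sub_abs_le_abs_sub (h i) (-(x i))
            rwa [abs_neg, sub_neg_eq_add, add_comm] at this
          linarith
      calc l1 (restrict Λ x) - l1 (restrict Λ h) + l1 (restrict Λᶜ h)
            - l1 (restrict Λᶜ x)
          = ∑ i, (|restrict Λ x i| - |restrict Λ h i| + |restrict Λᶜ h i|
            - |restrict Λᶜ x i|) := by
            simp [l1, Finset.sum_add_distrib, Finset.sum_sub_distrib]
        _ ≤ ∑ i, |xhat i| := Finset.sum_le_sum fun i _ => pt i
        _ = l1 xhat := rfl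
    have hsx := l1_split Λ x
    have hsh := l1_split Λ h
    have hopt2 : l1 (restrict Λᶜ h) ≤ 2 * l1 (restrict Λᶜ x) + l1 (restrict Λ h) := by
      linarith
    nlinarith [l1_nonneg (restrict Λᶜ h), l1_nonneg (restrict Λ h),
      mul_le_mul_of_nonneg_left hAh hτ]
  -- conclude via sInf
  have hne : {r | ∃ Λ : Finset (Fin n), GroupSparseSet G k Λ ∧
      r = l1 (restrict Λᶜ x)}.Nonempty := by
    exact ⟨l1 (restrict (∅ : Finset (Fin n))ᶜ x), ∅, ⟨⟨∅, by simp⟩, by simp⟩, rfl⟩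
  have hc : ((1 - ρ) * l1 h / 2 - 2 * τ * ε) / (1 + ρ) ≤ gIndex G k x := by
    apply le_csInf hne
    rintro r ⟨Λ, hΛ, rfl⟩
    rw [div_le_iff₀ (by linarith : (0:ℝ) < 1 + ρ)]
    have := perΛ Λ hΛ
    nlinarith
  rw [div_le_iff₀ (by linarith : (0:ℝ) < 1 + ρ)] at hc
  have h1ρ : (0:ℝ) < 1 - ρ := by linarith
  rw [div_mul_eq_mul_div, le_div_iff₀ h1ρ]
  linarith

end CS
end
end

section
/- For every real t > 1, with μ = √((t−1)t) − (t−1), the following algebraic identity holds: μ(1−μ)·(μ²/(2(t−1)) + 1/2 − μ + μ²)^{−1} = √((t−1)/t). Consequently, in the case of conventional sparsity (m_max = m_min = 1), the sufficient condition δ < μ(1−μ)·(μ² m_max²/(2(t−1) m_min) + 1/2 − μ + μ²)^{−1} reduces exactly to δ < √((t−1)/t). -/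
open Finset

noncomputable section

namespace CS

/-! Since `μ + (t - 1) = √((t - 1) t)`, `μ` is the positive root of
`x ^ 2 + 2 (t - 1) x = t - 1`. This relation collapses the denominator to `t μ ^ 2 / (t - 1)`,
after which the identity is once more the same quadratic relation. -/

variable {t μ : ℝ}

lemma sq_add_two_mul_eq (ht : 1 ≤ t) (hμ : μ = √((t - 1) * t) - (t - 1)) :
    μ ^ 2 + 2 * (t - 1) * μ = t - 1 := by
  have hs : √((t - 1) * t) ^ 2 = (t - 1) * t := Real.sq_sqrt (by nlinarith)
  rw [hμ]
  linear_combination hs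

lemma pos_of_eq_sqrt_sub (ht : 1 < t) (hμ : μ = √((t - 1) * t) - (t - 1)) : 0 < μ := by
  have : t - 1 < √((t - 1) * t) := Real.lt_sqrt_of_sq_lt (by nlinarith)
  linarith

lemma sqrt_sub_one_div_eq (ht : 0 < t) :
    √((t - 1) / t) = √((t - 1) * t) / t := by
  rw [show (t - 1) / t = (t - 1) * t / t ^ 2 by field_simp, Real.sqrt_div' _ (sq_nonneg t),
    Real.sqrt_sq ht.le]

lemma sq_div_add_half_sub_add_sq_eq (ht : 1 < t) (hrel : μ ^ 2 + 2 * (t - 1) * μ = t - 1) :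
    μ ^ 2 / (2 * (t - 1)) + 1 / 2 - μ + μ ^ 2 = t * μ ^ 2 / (t - 1) := by
  have ha : t - 1 ≠ 0 := by linarith
  field_simp
  linear_combination -hrel

lemma mul_one_sub_mul_inv_eq_sqrt (ht : 1 < t) (hμ : μ = √((t - 1) * t) - (t - 1)) :
    μ * (1 - μ) * (μ ^ 2 / (2 * (t - 1)) + 1 / 2 - μ + μ ^ 2)⁻¹ = √((t - 1) / t) := by
  have hrel := sq_add_two_mul_eq ht.le hμ
  have hμ0 := (pos_of_eq_sqrt_sub ht hμ).ne'
  have ha : t - 1 ≠ 0 := by linarith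
  have ht0 : t ≠ 0 := by linarith
  have hs : √((t - 1) * t) = μ + (t - 1) := by linarith
  rw [sq_div_add_half_sub_add_sq_eq ht hrel, sqrt_sub_one_div_eq (by linarith), hs]
  field_simp
  linear_combination -hrel

/-- **the bound reduces to the Cai–Zhang bound `√((t−1)/t)` for
conventional sparsity, where `m_max = m_min = 1`.** -/
theorem bound_reduces_to_cai_zhang (t : ℝ) (ht : 1 < t) (μ : ℝ)
    (hμ : μ = Real.sqrt ((t - 1) * t) - (t - 1)) :
    μ * (1 - μ) * (μ ^ 2 / (2 * (t - 1)) + 1 / 2 - μ + μ ^ 2)⁻¹ =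
      Real.sqrt ((t - 1) / t) ∧
    ∀ δ : ℝ,
      (δ < μ * (1 - μ) *
          (μ ^ 2 * (1 : ℝ) ^ 2 / (2 * (t - 1) * 1) + 1 / 2 - μ + μ ^ 2)⁻¹ ↔
        δ < Real.sqrt ((t - 1) / t)) := by
  have h := mul_one_sub_mul_inv_eq_sqrt ht hμ
  refine ⟨h, fun δ => ?_⟩
  simp only [one_pow, mul_one, h]

end CS
end
end

section
/- Suppose A ∈ ℝ^{m×n} satisfies the restricted isometry property of order tk (with t > 1 and tk an integer) with constant δ_{tk} = δ < √((t−1)/t). Set μ = √((t−1)t) − (t−1), a = [μ(1−μ) − δ(1/2 − μ + μ²)]^{1/2}, b = μ(1−μ)√(1+δ), c = [δ μ²/(2(t−1))]^{1/2}, ρ = c/a, and τ = b√k/a². Then ρ < 1 and A satisfies the ℓ2 robust null space property of order k: for every h ∈ ℝⁿ and every set S ⊆ {1,…,n} with |S| ≤ k, ‖h_S‖₂ ≤ (ρ/√k)·‖h_{S^c}‖₁ + (τ/√k)·‖Ah‖₂. -/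
open Finset

noncomputable section

namespace CS

/- helpers -/

lemma mem_supp {d : ℕ} {x : Fin d → ℝ} {i : Fin d} : i ∈ supp x ↔ x i ≠ 0 := by
  simp [supp]

def sq2 {d : ℕ} (x : Fin d → ℝ) : ℝ := ∑ i, x i ^ 2

def ip {d : ℕ} (x y : Fin d → ℝ) : ℝ := ∑ i, x i * y i

lemma sq2_nonneg {d : ℕ} (x : Fin d → ℝ) : 0 ≤ sq2 x :=
  Finset.sum_nonneg fun _ _ => sq_nonneg _

lemma l2_eq_sqrt {d : ℕ} (x : Fin d → ℝ) : l2 x = Real.sqrt (sq2 x) := rfl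

lemma l2_sq {d : ℕ} (x : Fin d → ℝ) : l2 x ^ 2 = sq2 x :=
  Real.sq_sqrt (sq2_nonneg x)

lemma ip_self {d : ℕ} (x : Fin d → ℝ) : ip x x = sq2 x :=
  Finset.sum_congr rfl fun i _ => by ring

lemma ip_le {d : ℕ} (x y : Fin d → ℝ) : ip x y ≤ l2 x * l2 y := by
  have h := Finset.sum_mul_sq_le_sq_mul_sq Finset.univ x y
  refine (le_abs_self _).trans ?_
  rw [← Real.sqrt_sq_eq_abs, l2_eq_sqrt, l2_eq_sqrt, ← Real.sqrt_mul (sq2_nonneg x)]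
  exact Real.sqrt_le_sqrt h

lemma ip_sub_right {d : ℕ} (x y z : Fin d → ℝ) : ip x (y - z) = ip x y - ip x z := by
  unfold ip
  rw [← Finset.sum_sub_distrib]
  exact Finset.sum_congr rfl fun i _ => by simp [Pi.sub_apply]; ring

lemma sq2_add_smul {d : ℕ} (x : Fin d → ℝ) (c : ℝ) (y : Fin d → ℝ) :
    sq2 (x + c • y) = sq2 x + 2 * c * ip x y + c ^ 2 * sq2 y := by
  unfold sq2 ip
  rw [Finset.mul_sum, Finset.mul_sum, ← Finset.sum_add_distrib, ← Finset.sum_add_distrib]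
  exact Finset.sum_congr rfl fun i _ => by simp [Pi.add_apply, Pi.smul_apply, smul_eq_mul]; ring

lemma sq2_smul_add_smul {d : ℕ} (c₁ : ℝ) (x : Fin d → ℝ) (c₂ : ℝ) (y : Fin d → ℝ) :
    sq2 (c₁ • x + c₂ • y) = c₁ ^ 2 * sq2 x + 2 * c₁ * c₂ * ip x y + c₂ ^ 2 * sq2 y := by
  unfold sq2 ip
  rw [Finset.mul_sum, Finset.mul_sum, Finset.mul_sum, ← Finset.sum_add_distrib,
    ← Finset.sum_add_distrib]
  exact Finset.sum_congr rfl fun i _ => by simp [Pi.add_apply, Pi.smul_apply, smul_eq_mul]; ring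

lemma ip_right_comb {d : ℕ} (c x y : Fin d → ℝ) (θ : ℝ) :
    ip c (θ • x + (1 - θ) • y) = θ * ip c x + (1 - θ) * ip c y := by
  unfold ip
  rw [Finset.mul_sum, Finset.mul_sum, ← Finset.sum_add_distrib]
  exact Finset.sum_congr rfl fun i _ => by simp [Pi.add_apply, Pi.smul_apply, smul_eq_mul]; ring

lemma supp_restrict {d : ℕ} (Λ : Finset (Fin d)) (x : Fin d → ℝ) :
    supp (restrict Λ x) ⊆ Λ := by
  intro i hi
  rw [mem_supp] at hi
  by_contra hc
  exact hi (by simp [restrict, hc])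

lemma l1_restrict {d : ℕ} (Λ : Finset (Fin d)) (x : Fin d → ℝ) :
    l1 (restrict Λ x) = ∑ i ∈ Λ, |x i| := by
  unfold l1 restrict
  rw [← Finset.sum_filter_add_sum_filter_not Finset.univ (fun i => i ∈ Λ)]
  have h1 : ∀ i ∈ Finset.univ.filter (fun i => i ∈ Λ), |if i ∈ Λ then x i else 0| = |x i| := by
    intro i hi; simp at hi; simp [hi]
  have h2 : ∀ i ∈ Finset.univ.filter (fun i => ¬ i ∈ Λ), |if i ∈ Λ then x i else 0| = 0 := by
    intro i hi; simp at hi; simp [hi]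
  rw [Finset.sum_congr rfl h1, Finset.sum_congr rfl h2, Finset.sum_const_zero, add_zero]
  congr 1
  ext i; simp

lemma l2_restrict_mono {d : ℕ} {S T : Finset (Fin d)} (hST : S ⊆ T) (x : Fin d → ℝ) :
    l2 (restrict S x) ≤ l2 (restrict T x) := by
  apply Real.sqrt_le_sqrt
  apply Finset.sum_le_sum
  intro i _
  unfold restrict
  by_cases hi : i ∈ S
  · simp [hi, hST hi]
  · simp [hi]; positivity

lemma restrict_compl_eq_sub {d : ℕ} (T : Finset (Fin d)) (x : Fin d → ℝ) :
    restrict Tᶜ x = x - restrict T x := by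
  funext i
  by_cases hi : i ∈ T <;> simp [restrict, hi]


/- sign helpers -/

lemma abs_add_sign {c t : ℝ} (hc : c ≠ 0) (ht : 0 ≤ t) :
    |c + t * Real.sign c| = |c| + t := by
  rcases hc.lt_or_gt with h | h
  · rw [Real.sign_of_neg h, abs_of_neg h, abs_of_neg (by nlinarith)]; ring
  · rw [Real.sign_of_pos h, abs_of_pos h, abs_of_pos (by nlinarith)]; ring

lemma abs_sub_sign {c t : ℝ} (ht : 0 ≤ t) (ht' : t ≤ |c|) :
    |c - t * Real.sign c| = |c| - t := by
  rcases lt_trichotomy c 0 with h | h | h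
  · rw [abs_of_neg h] at ht' ⊢
    rw [Real.sign_of_neg h, abs_of_nonpos (by nlinarith)]; ring
  · subst h
    simp at ht' ⊢
    linarith
  · rw [abs_of_pos h] at ht' ⊢
    rw [Real.sign_of_pos h, abs_of_nonneg (by nlinarith)]; ring

lemma sub_abs_sign (c : ℝ) : c - |c| * Real.sign c = 0 := by
  rcases lt_trichotomy c 0 with h | h | h
  · rw [Real.sign_of_neg h, abs_of_neg h]; ring
  · simp [h]
  · rw [Real.sign_of_pos h, abs_of_pos h]; ring

/-- The "free" coordinates: nonzero entries strictly below level α. -/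
def free {n : ℕ} (α : ℝ) (v : Fin n → ℝ) : Finset (Fin n) :=
  Finset.univ.filter fun l => v l ≠ 0 ∧ |v l| < α

lemma mem_free {n : ℕ} {α : ℝ} {v : Fin n → ℝ} {l : Fin n} :
    l ∈ free α v ↔ v l ≠ 0 ∧ |v l| < α := by simp [free]

/-- Moving mass between two free coordinates. -/
lemma move {n : ℕ} (α : ℝ) (v : Fin n → ℝ) (i j : Fin n) (hij : i ≠ j)
    (hvi : v i ≠ 0) (hvj : v j ≠ 0) (hiα : |v i| < α) (hjα : |v j| < α)
    (hvinf : ∀ l, |v l| ≤ α) :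
    ∃ x : Fin n → ℝ, ∃ t : ℝ, 0 < t ∧
      (∀ l, x l = v l + t * (if l = i then Real.sign (v i)
        else if l = j then -Real.sign (v j) else 0)) ∧
      (∀ l, x l ≠ 0 → v l ≠ 0) ∧ (∀ l, |x l| ≤ α) ∧ l1 x = l1 v ∧
      free α x ⊂ free α v := by
  set t := min (α - |v i|) |v j| with htdef
  have htpos : 0 < t := lt_min (by linarith) (abs_pos.2 hvj)
  have ht1 : t ≤ α - |v i| := min_le_left _ _
  have ht2 : t ≤ |v j| := min_le_right _ _
  set eV : Fin n → ℝ := fun l => if l = i then Real.sign (v i)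
      else if l = j then -Real.sign (v j) else 0 with heV
  set x : Fin n → ℝ := fun l => v l + t * eV l with hx
  have hxl : ∀ l, x l = v l + t * eV l := fun l => rfl
  have hxi : x i = v i + t * Real.sign (v i) := by
    rw [hxl]; rw [heV]; simp
  have hxj : x j = v j - t * Real.sign (v j) := by
    rw [hxl]; rw [heV]; simp [Ne.symm hij]; ring
  have hxo : ∀ l, l ≠ i → l ≠ j → x l = v l := by
    intro l h1 h2; rw [hxl]; rw [heV]; simp [h1, h2]
  have habsi : |x i| = |v i| + t := by rw [hxi, abs_add_sign hvi htpos.le]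
  have habsj : |x j| = |v j| - t := by rw [hxj, abs_sub_sign htpos.le ht2]
  refine ⟨x, t, htpos, hxl, ?_, ?_, ?_, ?_⟩
  · intro l
    rcases eq_or_ne l i with hl | hl
    · subst hl; intro _; exact hvi
    · rcases eq_or_ne l j with hl' | hl'
      · subst hl'; intro _; exact hvj
      · rw [hxo l hl hl']; exact id
  · intro l
    rcases eq_or_ne l i with hl | hl
    · subst hl; rw [habsi]; linarith
    · rcases eq_or_ne l j with hl' | hl'
      · subst hl'; rw [habsj]; linarith [hvinf l]
      · rw [hxo l hl hl']; exact hvinf l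
  · -- l1 preserved
    unfold l1
    have key : ∀ l : Fin n, |x l|
        = |v l| + ((if l = i then t else 0) + (if l = j then -t else 0)) := by
      intro l
      rcases eq_or_ne l i with hl | hl
      · subst hl; rw [habsi]; simp [hij]
      · rcases eq_or_ne l j with hl' | hl'
        · subst hl'; rw [habsj]; simp [hl]; ring
        · rw [hxo l hl hl']; simp [hl, hl']
    rw [Finset.sum_congr rfl fun l _ => key l]
    rw [Finset.sum_add_distrib, Finset.sum_add_distrib]
    simp [Finset.sum_ite_eq']
  · -- free set strictly shrinks
    constructor
    · intro l hl
      rw [mem_free] at hl ⊢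
      rcases eq_or_ne l i with h1 | h1
      · subst h1; exact ⟨hvi, hiα⟩
      · rcases eq_or_ne l j with h2 | h2
        · subst h2; exact ⟨hvj, hjα⟩
        · rw [hxo l h1 h2] at hl; exact hl
    · intro hsub
      rcases min_cases (α - |v i|) |v j| with ⟨heq, _⟩ | ⟨heq, _⟩
      · -- i becomes pinned at level α
        have hi' : i ∈ free α v := mem_free.2 ⟨hvi, hiα⟩
        have hmem := hsub hi'
        rw [mem_free] at hmem
        have : |x i| = α := by rw [habsi, htdef, heq]; ring
        linarith [hmem.2]
      · -- j becomes zero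
        have hj' : j ∈ free α v := mem_free.2 ⟨hvj, hjα⟩
        have hmem := hsub hj'
        rw [mem_free] at hmem
        apply hmem.1
        rw [hxj, htdef, heq]
        exact sub_abs_sign (v j)

/-- If the support is larger than `d` yet `l1 v ≤ d α`, then at least two
coordinates are free. -/
lemma two_free {n : ℕ} (v : Fin n → ℝ) (d : ℕ) (α : ℝ) (hα : 0 ≤ α)
    (hinf : ∀ i, |v i| ≤ α) (h1 : l1 v ≤ d * α) (hcard : d < (supp v).card) :
    2 ≤ (free α v).card := by
  by_contra hF
  push_neg at hF
  have hFsub : free α v ⊆ supp v := by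
    intro l hl; rw [mem_free] at hl; exact mem_supp.2 hl.1
  have hP : ∀ l ∈ supp v \ free α v, |v l| = α := by
    intro l hl
    rw [Finset.mem_sdiff, mem_supp, mem_free] at hl
    have h2 := hl.2
    push_neg at h2
    exact le_antisymm (hinf l) (h2 hl.1)
  have hl1supp : l1 v = ∑ l ∈ supp v, |v l| := by
    unfold l1
    rw [← Finset.sum_subset (Finset.subset_univ (supp v))]
    intro l _ hl
    rw [mem_supp] at hl; push_neg at hl; simp [hl]
  have hsplit : ∑ l ∈ supp v, |v l| =
      ∑ l ∈ supp v \ free α v, |v l| + ∑ l ∈ free α v, |v l| :=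
    (Finset.sum_sdiff hFsub).symm
  have hPsum : ∑ l ∈ supp v \ free α v, |v l| = ((supp v \ free α v).card : ℝ) * α := by
    rw [Finset.sum_congr rfl hP, Finset.sum_const, nsmul_eq_mul]
  have hcard2 : (supp v \ free α v).card = (supp v).card - (free α v).card :=
    Finset.card_sdiff_of_subset hFsub
  have hFnonneg : 0 ≤ ∑ l ∈ free α v, |v l| := Finset.sum_nonneg fun _ _ => abs_nonneg _
  have hPcard : d ≤ (supp v \ free α v).card := by omega
  have hdP : (d : ℝ) * α ≤ ((supp v \ free α v).card : ℝ) * α := by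
    apply mul_le_mul_of_nonneg_right _ hα
    exact_mod_cast hPcard
  have hFzero : ∑ l ∈ free α v, |v l| ≤ 0 := by
    rw [hl1supp, hsplit, hPsum] at h1
    linarith
  have hFempty : free α v = ∅ := by
    by_contra hne
    obtain ⟨l, hl⟩ := Finset.nonempty_iff_ne_empty.2 hne
    have hpos : 0 < |v l| := abs_pos.2 (mem_free.1 hl).1
    have : 0 < ∑ l ∈ free α v, |v l| :=
      Finset.sum_pos' (fun _ _ => abs_nonneg _) ⟨l, hl, hpos⟩
    linarith
  have hcards : supp v \ free α v = supp v := by rw [hFempty, Finset.sdiff_empty]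
  rw [hl1supp, hsplit, hPsum] at h1
  rw [hcards] at h1
  rw [hFempty, Finset.sum_empty, add_zero] at h1
  have hscard : (d : ℝ) + 1 ≤ ((supp v).card : ℝ) := by exact_mod_cast hcard
  have hα0 : α ≤ 0 := by nlinarith
  have hvz : ∀ l, v l = 0 := by
    intro l
    have h3 := hinf l
    have h4 := abs_nonneg (v l)
    rw [← abs_eq_zero]
    linarith
  have hsupp0 : supp v = ∅ :=
    Finset.eq_empty_of_forall_notMem fun l hl => (mem_supp.1 hl) (hvz l)
  rw [hsupp0] at hcard
  simp at hcard


/-- A (finitely-supported) affine function attains its minimum over the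
"polytope" of vectors supported in Ω with sup-norm ≤ α and 1-norm ≤ d α at
d-sparse points. -/
lemma affine_min {n : ℕ} (φ : (Fin n → ℝ) → ℝ)
    (haff : ∀ x y : Fin n → ℝ, ∀ θ : ℝ, φ (θ • x + (1 - θ) • y) = θ * φ x + (1 - θ) * φ y)
    (Ω : Finset (Fin n)) (d : ℕ) (α κ : ℝ) (hα : 0 ≤ α)
    (hbase : ∀ u : Fin n → ℝ, supp u ⊆ Ω → (supp u).card ≤ d →
      (∀ i, |u i| ≤ α) → l1 u ≤ d * α → κ ≤ φ u) :
    ∀ v : Fin n → ℝ, supp v ⊆ Ω → (∀ i, |v i| ≤ α) → l1 v ≤ d * α → κ ≤ φ v := by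
  suffices H : ∀ N : ℕ, ∀ v : Fin n → ℝ, (free α v).card ≤ N → supp v ⊆ Ω →
      (∀ i, |v i| ≤ α) → l1 v ≤ d * α → κ ≤ φ v by
    intro v h1 h2 h3
    exact H (free α v).card v le_rfl h1 h2 h3
  intro N
  induction N with
  | zero =>
    intro v hN hΩ hinf h1
    by_cases hcard : (supp v).card ≤ d
    · exact hbase v hΩ hcard hinf h1
    · push_neg at hcard
      have := two_free v d α hα hinf h1 hcard
      omega
  | succ N IH =>
    intro v hN hΩ hinf h1
    by_cases hcard : (supp v).card ≤ d
    · exact hbase v hΩ hcard hinf h1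
    · push_neg at hcard
      have h2F := two_free v d α hα hinf h1 hcard
      obtain ⟨i, hi, j, hj, hij⟩ := Finset.one_lt_card.1 (by omega : 1 < (free α v).card)
      rw [mem_free] at hi hj
      obtain ⟨x, tp, htp, hxf, hxsupp, hxinf, hxl1, hxss⟩ :=
        move α v i j hij hi.1 hj.1 hi.2 hj.2 hinf
      obtain ⟨y, tm, htm, hyf, hysupp, hyinf, hyl1, hyss⟩ :=
        move α v j i hij.symm hj.1 hi.1 hj.2 hi.2 hinf
      have hκx : κ ≤ φ x := by
        apply IH x _ _ hxinf (hxl1.trans_le h1)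
        · have := Finset.card_lt_card hxss
          omega
        · intro l hl
          exact hΩ (mem_supp.2 (hxsupp l (mem_supp.1 hl)))
      have hκy : κ ≤ φ y := by
        apply IH y _ _ hyinf (hyl1.trans_le h1)
        · have := Finset.card_lt_card hyss
          omega
        · intro l hl
          exact hΩ (mem_supp.2 (hysupp l (mem_supp.1 hl)))
      -- v is a convex combination of x and y
      set θ : ℝ := tm / (tp + tm) with hθdef
      have hsum : 0 < tp + tm := by linarith
      have hθ0 : 0 ≤ θ := by positivity
      have hθ1 : θ ≤ 1 := by
        rw [hθdef, div_le_one hsum]; linarith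
      have hcomb : v = θ • x + (1 - θ) • y := by
        funext l
        have hx := hxf l
        have hy := hyf l
        simp only [Pi.add_apply, Pi.smul_apply, smul_eq_mul]
        rw [hx, hy]
        have hmatch : (if l = j then Real.sign (v j) else if l = i then -Real.sign (v i) else 0)
            = -(if l = i then Real.sign (v i) else if l = j then -Real.sign (v j) else 0) := by
          rcases eq_or_ne l i with h1' | h1'
          · subst h1'; simp [hij]
          · rcases eq_or_ne l j with h2' | h2' <;> simp [h1', h2', Ne.symm hij]
        rw [hmatch]
        set E := (if l = i then Real.sign (v i)
          else if l = j then -Real.sign (v j) else 0) with hEdef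
        rw [hθdef]
        have hne : tp + tm ≠ 0 := ne_of_gt hsum
        field_simp
        ring
      calc κ = θ * κ + (1 - θ) * κ := by ring
      _ ≤ θ * φ x + (1 - θ) * φ y := by
        apply add_le_add
        · exact mul_le_mul_of_nonneg_left hκx hθ0
        · exact mul_le_mul_of_nonneg_left hκy (by linarith)
      _ = φ (θ • x + (1 - θ) • y) := (haff x y θ).symm
      _ = φ v := by rw [← hcomb]


lemma quad_ineq {a b c X Y W : ℝ} (ha : 0 < a) (hb : 0 ≤ b) (hc : 0 ≤ c)
    (hY : 0 ≤ Y) (hW : 0 ≤ W)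
    (h : a ^ 2 * X ^ 2 ≤ b * (X * Y) + c ^ 2 * W ^ 2) :
    X ≤ b / a ^ 2 * Y + c / a * W := by
  by_contra hcon
  push_neg at hcon
  have hrhs : 0 ≤ b / a ^ 2 * Y + c / a * W := by positivity
  have hX0 : 0 < X := lt_of_le_of_lt hrhs hcon
  have hq : c / a * W ≤ X := le_trans (le_add_of_nonneg_left (by positivity)) hcon.le
  have hcw : c * W ≤ a * X := by
    rw [div_mul_eq_mul_div, div_le_iff₀ ha] at hq
    linarith
  have e1 : b * (X * Y) + a * c * (X * W) < a ^ 2 * X ^ 2 := by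
    have h2 := mul_lt_mul_of_pos_left hcon (mul_pos (pow_pos ha 2) hX0)
    calc b * (X * Y) + a * c * (X * W) = a ^ 2 * X * (b / a ^ 2 * Y + c / a * W) := by
          field_simp
    _ < a ^ 2 * X * X := h2
    _ = a ^ 2 * X ^ 2 := by ring
  have e2 : c ^ 2 * W ^ 2 ≤ a * c * (X * W) := by
    nlinarith [mul_le_mul_of_nonneg_left hcw (mul_nonneg hc hW)]
  linarith


set_option maxHeartbeats 1000000 in
/-- **RIP with `δ < √((t−1)/t)` implies the ℓ2 robust null space
property of order `k`, conventional sparsity.** -/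
theorem rip_implies_rnsp {n m k tk : ℕ} (t : ℝ) (ht : 1 < t)
    (htk : (tk : ℝ) = t * k)
    (A : Matrix (Fin m) (Fin n) ℝ)
    (δ : ℝ) (hδ0 : 0 < δ) (hδ : δ < Real.sqrt ((t - 1) / t))
    (hA : RIP A tk δ)
    (μ a b c ρ τ : ℝ)
    (hμ : μ = Real.sqrt ((t - 1) * t) - (t - 1))
    (ha : a = Real.sqrt (μ * (1 - μ) - δ * (1 / 2 - μ + μ ^ 2)))
    (hb : b = μ * (1 - μ) * Real.sqrt (1 + δ))
    (hc : c = Real.sqrt (δ * μ ^ 2 / (2 * (t - 1))))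
    (hρ : ρ = c / a) (hτ : τ = b * Real.sqrt k / a ^ 2) :
    ρ < 1 ∧
      ∀ (h : Fin n → ℝ) (S : Finset (Fin n)), S.card ≤ k →
        l2 (restrict S h) ≤
          ρ / Real.sqrt k * l1 (restrict Sᶜ h) +
            τ / Real.sqrt k * l2 (A.mulVec h) := by
  -- ## Scalar preliminaries
  have hs : (0:ℝ) < t - 1 := by linarith
  have ht0 : (0:ℝ) < t := by linarith
  have hμs : μ + (t - 1) = Real.sqrt ((t - 1) * t) := by rw [hμ]; ring
  have hsq : (μ + (t - 1)) ^ 2 = (t - 1) * t := by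
    rw [hμs]; exact Real.sq_sqrt (by positivity)
  have hkey : μ ^ 2 = (t - 1) - 2 * (t - 1) * μ := by linear_combination hsq
  have hμpos : 0 < μ := by
    have h1 : (t - 1) < Real.sqrt ((t - 1) * t) :=
      (Real.lt_sqrt hs.le).2 (by nlinarith)
    rw [hμ]; linarith
  have hμhalf : μ < 1 / 2 := by
    by_contra hcon
    push_neg at hcon
    have h2 : 0 ≤ (t - 1) * (2 * μ - 1) := mul_nonneg hs.le (by linarith)
    nlinarith [hkey, mul_pos hμpos hμpos]
  have hδspos : 0 < Real.sqrt ((t - 1) / t) := lt_trans hδ0 hδ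
  have hstar_t : Real.sqrt ((t - 1) / t) * t = Real.sqrt ((t - 1) * t) := by
    rw [show (t - 1) * t = ((t - 1) / t) * t ^ 2 by field_simp]
    rw [Real.sqrt_mul (by positivity) (t ^ 2), Real.sqrt_sq ht0.le]
  have hq2 : μ ^ 2 / (2 * (t - 1)) = 1 / 2 - μ := by
    rw [hkey]; field_simp
  have hident : μ * (1 - μ) =
      Real.sqrt ((t - 1) / t) * ((1 / 2 - μ + μ ^ 2) + μ ^ 2 / (2 * (t - 1))) := by
    rw [hq2]
    have h3 : (1 / 2 - μ + μ ^ 2) + (1 / 2 - μ) = t * (1 - 2 * μ) := by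
      linear_combination hkey
    rw [h3, ← mul_assoc, hstar_t, ← hμs]
    linear_combination hkey
  have hk0 : (0:ℝ) < 1 / 2 - μ + μ ^ 2 := by nlinarith [sq_nonneg (μ - 1 / 2)]
  have hm : (0:ℝ) < μ ^ 2 / (2 * (t - 1)) := by positivity
  have hident2 : μ * (1 - μ) =
      Real.sqrt ((t - 1) / t) * ((1 / 2 - μ + μ ^ 2) + (1 / 2 - μ)) := by
    rw [hident, hq2]
  have h6 : (0:ℝ) < (1 / 2 - μ + μ ^ 2) + (1 / 2 - μ) := by
    have := sq_nonneg μ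
    linarith
  have h5 : 0 < (Real.sqrt ((t - 1) / t) - δ) * ((1 / 2 - μ + μ ^ 2) + (1 / 2 - μ)) :=
    mul_pos (sub_pos.2 hδ) h6
  have hfinal : δ * μ ^ 2 / (2 * (t - 1)) < μ * (1 - μ) - δ * (1 / 2 - μ + μ ^ 2) := by
    have h7 : δ * μ ^ 2 / (2 * (t - 1)) = δ * (1 / 2 - μ) := by
      rw [mul_div_assoc, hq2]
    rw [h7]
    nlinarith [hident2, h5]
  have harg : 0 < μ * (1 - μ) - δ * (1 / 2 - μ + μ ^ 2) :=
    lt_of_le_of_lt (by positivity : (0:ℝ) ≤ δ * μ ^ 2 / (2 * (t - 1))) hfinal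
  have ha2 : a ^ 2 = μ * (1 - μ) - δ * (1 / 2 - μ + μ ^ 2) := by
    rw [ha]; exact Real.sq_sqrt harg.le
  have hapos : 0 < a := by rw [ha]; exact Real.sqrt_pos.2 harg
  have hc2 : c ^ 2 = δ * μ ^ 2 / (2 * (t - 1)) := by
    rw [hc]; exact Real.sq_sqrt (by positivity)
  have hc0 : 0 ≤ c := by rw [hc]; positivity
  have hb0 : 0 ≤ b := by
    rw [hb]; exact mul_nonneg (mul_nonneg hμpos.le (by linarith)) (Real.sqrt_nonneg _)
  have hρ1 : ρ < 1 := by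
    have hc2a : c ^ 2 < a ^ 2 := by rw [ha2, hc2]; exact hfinal
    have hca : c < a := lt_of_pow_lt_pow_left₀ 2 hapos.le hc2a
    rw [hρ, div_lt_one hapos]; exact hca
  refine ⟨hρ1, ?_⟩
  intro h S hS
  rcases Nat.eq_zero_or_pos k with hk0' | hk1
  · subst hk0'
    have hS0 : S = ∅ := Finset.card_eq_zero.1 (Nat.le_zero.1 hS)
    subst hS0
    simp only [Nat.cast_zero, Real.sqrt_zero, div_zero, zero_mul, add_zero]
    have : l2 (restrict (∅ : Finset (Fin n)) h) = 0 := by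
      unfold l2 restrict
      simp
    rw [this]
  · -- main case k ≥ 1
    have hkR : (1:ℝ) ≤ (k:ℝ) := by exact_mod_cast hk1
    have hktk : k ≤ tk := by
      have h1 : (k:ℝ) ≤ (tk:ℝ) := by
        rw [htk]
        have h2 := mul_nonneg hs.le (Nat.cast_nonneg (α := ℝ) k)
        linarith
      exact_mod_cast h1
    obtain ⟨Z, hZdef⟩ : ∃ Z : ℝ, Z = l1 (restrict Sᶜ h) := ⟨_, rfl⟩
    obtain ⟨Y, hYdef⟩ : ∃ Y : ℝ, Y = l2 (A.mulVec h) := ⟨_, rfl⟩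
    rw [← hZdef, ← hYdef]
    obtain ⟨r, hrdef⟩ : ∃ r : ℕ, r = tk - k := ⟨_, rfl⟩
    have hrR : (r:ℝ) = (t - 1) * (k:ℝ) := by
      have h1 : (r:ℝ) = (tk:ℝ) - (k:ℝ) := by
        rw [hrdef]; exact Nat.cast_sub hktk
      rw [h1, htk]; ring
    have hrpos : 0 < (r:ℝ) := by rw [hrR]; apply mul_pos hs; linarith
    have hZ0 : 0 ≤ Z := hZdef ▸ l1_nonneg _
    obtain ⟨α, hαdef⟩ : ∃ α : ℝ, α = Z / r := ⟨_, rfl⟩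
    have hα0 : 0 ≤ α := by rw [hαdef]; positivity
    obtain ⟨B, hBdef⟩ : ∃ B : Finset (Fin n), B = Sᶜ.filter (fun i => α < |h i|) := ⟨_, rfl⟩
    have hBsub : B ⊆ Sᶜ := hBdef ▸ Finset.filter_subset _ _
    have hZsum : Z = ∑ i ∈ Sᶜ, |h i| := by rw [hZdef, l1_restrict]
    have hrα : (r:ℝ) * α = Z := by
      rw [hαdef]; field_simp
    have hBlow : (B.card : ℝ) * α ≤ ∑ i ∈ B, |h i| := by
      have h1 : ∑ _i ∈ B, α ≤ ∑ i ∈ B, |h i| := by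
        apply Finset.sum_le_sum
        intro i hi
        rw [hBdef] at hi
        exact le_of_lt (Finset.mem_filter.1 hi).2
      rwa [Finset.sum_const, nsmul_eq_mul] at h1
    have hBZ : ∑ i ∈ B, |h i| ≤ Z := by
      rw [hZsum]
      exact Finset.sum_le_sum_of_subset_of_nonneg hBsub fun _ _ _ => abs_nonneg _
    have hBcardN : B.card ≤ r := by
      rcases hα0.eq_or_lt with hc0' | hc0'
      · -- α = 0 : then Z = 0 and B = ∅
        have hZzero : Z = 0 := by rw [← hrα, ← hc0', mul_zero]
        have hBempty : B = ∅ := by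
          apply Finset.eq_empty_of_forall_notMem
          intro i hi
          have h1 : α < |h i| := by rw [hBdef] at hi; exact (Finset.mem_filter.1 hi).2
          have h2 : ∑ j ∈ Sᶜ, |h j| = 0 := by rw [← hZsum]; exact hZzero
          have h3 : |h i| = 0 :=
            (Finset.sum_eq_zero_iff_of_nonneg fun _ _ => abs_nonneg _).1 h2 i (hBsub hi)
          rw [← hc0'] at h1
          linarith
        rw [hBempty]; simp
      · have h1 : (B.card : ℝ) * α ≤ (r:ℝ) * α := by
          rw [hrα]; linarith
        have h2 : (B.card : ℝ) ≤ (r:ℝ) := le_of_mul_le_mul_right h1 hc0'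
        exact_mod_cast h2
    obtain ⟨T, hTdef⟩ : ∃ T : Finset (Fin n), T = S ∪ B := ⟨_, rfl⟩
    obtain ⟨dd, hddef⟩ : ∃ dd : ℕ, dd = r - B.card := ⟨_, rfl⟩
    have hdR : (dd:ℝ) = (r:ℝ) - (B.card:ℝ) := by
      rw [hddef]; exact Nat.cast_sub hBcardN
    have hTd : T.card + dd ≤ tk := by
      have h1 : T.card ≤ S.card + B.card := hTdef ▸ Finset.card_union_le _ _
      omega
    obtain ⟨v, hvdef⟩ : ∃ v : Fin n → ℝ, v = restrict Tᶜ h := ⟨_, rfl⟩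
    have hvΩ : supp v ⊆ Tᶜ := hvdef ▸ supp_restrict _ _
    have hST : S ⊆ T := by rw [hTdef]; exact Finset.subset_union_left
    have hvinf : ∀ i, |v i| ≤ α := by
      intro i
      rw [hvdef]
      unfold restrict
      by_cases hi : i ∈ Tᶜ
      · rw [if_pos hi]
        rw [Finset.mem_compl, hTdef, Finset.mem_union] at hi
        push_neg at hi
        have hiS : i ∈ Sᶜ := Finset.mem_compl.2 hi.1
        have hiB := hi.2
        rw [hBdef, Finset.mem_filter] at hiB
        push_neg at hiB
        exact hiB hiS
      · rw [if_neg hi]; simpa using hα0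
    have hv1 : l1 v ≤ dd * α := by
      have hTc : Tᶜ = Sᶜ \ B := by
        rw [hTdef, Finset.compl_union, sdiff_eq, Finset.inf_eq_inter]
      have h1 : l1 v = ∑ i ∈ Sᶜ, |h i| - ∑ i ∈ B, |h i| := by
        rw [hvdef, l1_restrict, hTc, Finset.sum_sdiff_eq_sub hBsub]
      rw [h1, ← hZsum, hdR]
      linarith only [hBlow, hrα]
    -- RIP in squared form
    have hA2 : ∀ u : Fin n → ℝ, (supp u).card ≤ tk →
        (1 - δ) * sq2 u ≤ sq2 (A.mulVec u) ∧ sq2 (A.mulVec u) ≤ (1 + δ) * sq2 u := by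
      intro u hu
      have h1 := hA u hu
      rwa [l2_sq, l2_sq] at h1
    obtain ⟨g, hgdef⟩ : ∃ g : Fin n → ℝ, g = restrict T h := ⟨_, rfl⟩
    have hgsupp : (supp g).card ≤ tk := by
      have h1 : (supp g).card ≤ T.card := hgdef ▸ Finset.card_le_card (supp_restrict _ _)
      omega
    obtain ⟨X, hXdef⟩ : ∃ X : ℝ, X = l2 g := ⟨_, rfl⟩
    have hX0 : 0 ≤ X := hXdef ▸ l2_nonneg _
    have hX2 : X ^ 2 = sq2 g := by rw [hXdef]; exact l2_sq g
    have hY0 : 0 ≤ Y := hYdef ▸ l2_nonneg _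
    obtain ⟨NA, hNAdef⟩ : ∃ NA : ℝ, NA = sq2 (A.mulVec g) := ⟨_, rfl⟩
    have h4μ : 0 < 4 * μ * (1 - μ) :=
      mul_pos (mul_pos (by norm_num : (0:ℝ) < 4) hμpos) (by linarith)
    obtain ⟨κ, hκdef⟩ : ∃ κ : ℝ, κ = ((1 - δ) * X ^ 2 - (1 + δ) * ((2 * μ - 1) ^ 2 * X ^ 2)
        - 2 * δ * μ ^ 2 * (dd * α ^ 2) - 4 * μ * (1 - μ) * NA) / (4 * μ * (1 - μ)) := ⟨_, rfl⟩
    have haff : ∀ x y : Fin n → ℝ, ∀ θ : ℝ,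
        ip (A.mulVec g) (A.mulVec (θ • x + (1 - θ) • y))
          = θ * ip (A.mulVec g) (A.mulVec x) + (1 - θ) * ip (A.mulVec g) (A.mulVec y) := by
      intro x y θ
      rw [Matrix.mulVec_add, Matrix.mulVec_smul, Matrix.mulVec_smul]
      exact ip_right_comb _ _ _ θ
    have hbase : ∀ u : Fin n → ℝ, supp u ⊆ Tᶜ → (supp u).card ≤ dd →
        (∀ i, |u i| ≤ α) → l1 u ≤ dd * α → κ ≤ ip (A.mulVec g) (A.mulVec u) := by
      intro u hu1 hu2 hu3 hu4
      have hW : sq2 u ≤ dd * α ^ 2 := by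
        have h1 : sq2 u ≤ α * l1 u := by
          unfold sq2 l1
          rw [Finset.mul_sum]
          apply Finset.sum_le_sum
          intro i _
          calc u i ^ 2 = |u i| * |u i| := by rw [← sq_abs]; ring
          _ ≤ α * |u i| := mul_le_mul_of_nonneg_right (hu3 i) (abs_nonneg _)
        have h2 := mul_le_mul_of_nonneg_left hu4 hα0
        have h3 : α * ((dd:ℝ) * α) = (dd:ℝ) * α ^ 2 := by ring
        linarith only [h1, h2, h3]
      have hipgu : ip g u = 0 := by
        apply Finset.sum_eq_zero
        intro i _
        by_cases hi : i ∈ T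
        · have h1 : u i = 0 := by
            by_contra hne
            exact (Finset.mem_compl.1 (hu1 (mem_supp.2 hne))) hi
          rw [h1, mul_zero]
        · have h1 : g i = 0 := by rw [hgdef]; unfold restrict; rw [if_neg hi]
          rw [h1, zero_mul]
      have hsub1 : ∀ (cf : ℝ), supp (cf • g + μ • u) ⊆ T ∪ supp u := by
        intro cf i hi
        rw [mem_supp] at hi
        rw [Finset.mem_union]
        by_contra hcc
        push_neg at hcc
        have h1 : g i = 0 := by rw [hgdef]; unfold restrict; rw [if_neg hcc.1]
        have h2 : u i = 0 := by
          by_contra hne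
          exact hcc.2 (mem_supp.2 hne)
        apply hi
        simp [h1, h2]
      have hcardTu : (T ∪ supp u).card ≤ tk := by
        have h1 := Finset.card_union_le T (supp u)
        omega
      have hcard1 : (supp (g + μ • u)).card ≤ tk := by
        have h0 : g + μ • u = (1:ℝ) • g + μ • u := by rw [one_smul]
        refine le_trans (Finset.card_le_card ?_) hcardTu
        rw [h0]; exact hsub1 1
      have hcard2 : (supp ((2 * μ - 1) • g + μ • u)).card ≤ tk :=
        le_trans (Finset.card_le_card (hsub1 _)) hcardTu
      have hrip1 := (hA2 _ hcard1).1
      have hrip2 := (hA2 _ hcard2).2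
      have he1 : sq2 (g + μ • u) = sq2 g + μ ^ 2 * sq2 u := by
        rw [sq2_add_smul, hipgu]; ring
      have he2 : sq2 ((2 * μ - 1) • g + μ • u) = (2 * μ - 1) ^ 2 * sq2 g + μ ^ 2 * sq2 u := by
        rw [sq2_smul_add_smul, hipgu]; ring
      have hAe1 : sq2 (A.mulVec (g + μ • u))
          = NA + 2 * μ * ip (A.mulVec g) (A.mulVec u) + μ ^ 2 * sq2 (A.mulVec u) := by
        rw [hNAdef, Matrix.mulVec_add, Matrix.mulVec_smul, sq2_add_smul]
      have hAe2 : sq2 (A.mulVec ((2 * μ - 1) • g + μ • u))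
          = (2 * μ - 1) ^ 2 * NA + 2 * (2 * μ - 1) * μ * ip (A.mulVec g) (A.mulVec u)
            + μ ^ 2 * sq2 (A.mulVec u) := by
        rw [hNAdef, Matrix.mulVec_add, Matrix.mulVec_smul, Matrix.mulVec_smul, sq2_smul_add_smul]
      have hWδ : δ * μ ^ 2 * sq2 u ≤ δ * μ ^ 2 * (dd * α ^ 2) :=
        mul_le_mul_of_nonneg_left hW (by positivity)
      rw [hκdef, div_le_iff₀ h4μ]
      rw [he1, ← hX2, hAe1] at hrip1
      rw [he2, ← hX2, hAe2] at hrip2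
      linarith only [hrip1, hrip2, hWδ]
    have hfin : κ ≤ ip (A.mulVec g) (A.mulVec v) :=
      affine_min (fun u => ip (A.mulVec g) (A.mulVec u)) haff Tᶜ dd α κ hα0 hbase
        v hvΩ hvinf hv1
    have hAv : A.mulVec v = A.mulVec h - A.mulVec g := by
      rw [hvdef, hgdef, restrict_compl_eq_sub, Matrix.mulVec_sub]
    obtain ⟨G, hGdef⟩ : ∃ G : ℝ, G = ip (A.mulVec g) (A.mulVec h) := ⟨_, rfl⟩
    have hφv : ip (A.mulVec g) (A.mulVec v) = G - NA := by
      rw [hAv, ip_sub_right, ip_self, hGdef, hNAdef]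
    have hAg : sq2 (A.mulVec g) ≤ (1 + δ) * X ^ 2 := by
      rw [hX2]; exact (hA2 g hgsupp).2
    have hl2Ag : l2 (A.mulVec g) ≤ Real.sqrt (1 + δ) * X := by
      rw [l2_eq_sqrt]
      have h1 : sq2 (A.mulVec g) ≤ (Real.sqrt (1 + δ) * X) ^ 2 := by
        rw [mul_pow, Real.sq_sqrt (by linarith : (0:ℝ) ≤ 1 + δ)]
        exact hAg
      calc Real.sqrt (sq2 (A.mulVec g)) ≤ Real.sqrt ((Real.sqrt (1 + δ) * X) ^ 2) :=
            Real.sqrt_le_sqrt h1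
      _ = Real.sqrt (1 + δ) * X := Real.sqrt_sq (by positivity)
    have hG : G ≤ Real.sqrt (1 + δ) * X * Y := by
      rw [hGdef, hYdef]
      calc ip (A.mulVec g) (A.mulVec h) ≤ l2 (A.mulVec g) * l2 (A.mulVec h) := ip_le _ _
      _ ≤ Real.sqrt (1 + δ) * X * l2 (A.mulVec h) :=
        mul_le_mul_of_nonneg_right hl2Ag (l2_nonneg _)
    have hmain1 : (1 - δ) * X ^ 2 - (1 + δ) * ((2 * μ - 1) ^ 2 * X ^ 2)
        - 2 * δ * μ ^ 2 * (dd * α ^ 2) ≤ 4 * μ * (1 - μ) * G := by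
      rw [hφv] at hfin
      rw [hκdef, div_le_iff₀ h4μ] at hfin
      linarith
    have hsqrtk : 0 < Real.sqrt k := Real.sqrt_pos.2 (by linarith)
    have hquadpre : a ^ 2 * X ^ 2 ≤ b * (X * Y) + c ^ 2 * (Z / Real.sqrt k) ^ 2 := by
      have hsqk : (Real.sqrt k) ^ 2 = (k:ℝ) := Real.sq_sqrt (by positivity)
      have hcc : 2 * δ * μ ^ 2 * (dd * α ^ 2) ≤ 4 * c ^ 2 * ((Z / Real.sqrt k) ^ 2) := by
        have hda : dd * α ^ 2 ≤ Z ^ 2 / r := by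
          have h1 : (dd:ℝ) ≤ (r:ℝ) := by
            rw [hdR]; linarith [Nat.cast_nonneg (α := ℝ) B.card]
          calc (dd:ℝ) * α ^ 2 ≤ (r:ℝ) * α ^ 2 :=
                mul_le_mul_of_nonneg_right h1 (sq_nonneg α)
          _ = Z ^ 2 / r := by
            rw [hαdef]; field_simp
        have hrw : (4:ℝ) * c ^ 2 * ((Z / Real.sqrt k) ^ 2)
            = 2 * δ * μ ^ 2 * (Z ^ 2 / r) := by
          rw [div_pow, hsqk, hc2, hrR]
          have hkne : (k:ℝ) ≠ 0 := by linarith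
          field_simp
          ring
        rw [hrw]
        exact mul_le_mul_of_nonneg_left hda (by positivity)
      have hbXY : 4 * μ * (1 - μ) * G ≤ 4 * μ * (1 - μ) * (Real.sqrt (1 + δ) * X * Y) :=
        mul_le_mul_of_nonneg_left hG h4μ.le
      rw [ha2, hb]
      linarith only [hmain1, hbXY, hcc]
    have hXfin : X ≤ b / a ^ 2 * Y + c / a * (Z / Real.sqrt k) :=
      quad_ineq hapos hb0 hc0 hY0 (div_nonneg hZ0 hsqrtk.le) hquadpre
    have hLHS : l2 (restrict S h) ≤ X := by
      rw [hXdef, hgdef]; exact l2_restrict_mono hST h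
    have hRHS : ρ / Real.sqrt k * Z + τ / Real.sqrt k * Y
        = c / a * (Z / Real.sqrt k) + b / a ^ 2 * Y := by
      rw [hρ, hτ]
      have hk2 : Real.sqrt k ≠ 0 := ne_of_gt hsqrtk
      field_simp
    calc l2 (restrict S h) ≤ X := hLHS
    _ ≤ b / a ^ 2 * Y + c / a * (Z / Real.sqrt k) := hXfin
    _ = ρ / Real.sqrt k * Z + τ / Real.sqrt k * Y := by rw [hRHS]; ring

end CS
end
end
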